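/- arXiv:2103.04161 — 3 statements merged into one kernel-verified Lean document; each statement's English description precedes it below -/
import Mathlib

section
/- If {T_r}_{r>0} with T_r = r^E is a contracting continuous one-parameter group on R^d, then E is invertible and tr(E) > 0. -/
/-!
A vector killed by `E` is fixed by every `exp (t • E)`; since `exp (t • E) → 0` as `t → -∞`, it
must be `0`, so `E` is injective, hence bijective in finite dimension. For the trace, Jacobi's
formula at the identity and the group law `exp ((s + t) • E) = exp (s • E) * exp (t • E)` show
that `g t = det (exp (t • E))` solves `g' = (tr E) g`, `g 0 = 1`, so
`det (exp (t • E)) = exp (t tr E)`. The left side tends to `det 0 = 0` as `t → -∞`, which forces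
`tr E > 0`.
-/

open MeasureTheory Filter Set

/-- The continuous one-parameter group `T_r = r^E = exp((ln r) E)` generated by an
endomorphism `E` of `ℝ^d`. -/
noncomputable def Tgrp {d : ℕ} (E : EuclideanSpace ℝ (Fin d) →L[ℝ] EuclideanSpace ℝ (Fin d))
    (r : ℝ) : EuclideanSpace ℝ (Fin d) →L[ℝ] EuclideanSpace ℝ (Fin d) :=
  NormedSpace.exp (Real.log r • E)

/-- The group `{T_r}` is contracting: `‖T_r‖ → 0` as `r → 0⁺` (operator norm). -/
def IsContracting {d : ℕ} (E : EuclideanSpace ℝ (Fin d) →L[ℝ] EuclideanSpace ℝ (Fin d)) : Prop :=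
  Tendsto (fun r : ℝ => ‖Tgrp E r‖) (nhdsWithin 0 (Set.Ioi 0)) (nhds 0)

open Topology Polynomial

namespace Matrix

variable {n 𝕜 : Type*} [Fintype n] [DecidableEq n] [NontriviallyNormedField 𝕜]

theorem hasDerivAt_det {c : 𝕜 → Matrix n n 𝕜} {A : Matrix n n 𝕜} {t₀ : 𝕜}
    (hc : ∀ i j, HasDerivAt (fun t => c t i j) (A i j) t₀) :
    HasDerivAt (fun t => (c t).det)
      (∑ σ : Equiv.Perm n, Equiv.Perm.sign σ •
        ∑ i, (∏ j ∈ Finset.univ.erase i, c t₀ (σ j) j) * A (σ i) i) t₀ := by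
  simp_rw [det_apply]
  exact .fun_sum fun σ _ => (HasDerivAt.fun_finsetProd fun i _ => hc (σ i) i).const_smul _

theorem hasDerivAt_det_one_add_smul (A : Matrix n n 𝕜) :
    HasDerivAt (fun t : 𝕜 => (1 + t • A).det) A.trace 0 := by
  have h := (det (1 + (X : 𝕜[X]) • A.map C)).hasDerivAt 0
  rw [derivative_det_one_add_X_smul] at h
  convert h using 2 with t
  simp [eval_det, ← smul_eq_mul_diagonal]

theorem hasDerivAt_det_of_eq_one {c : 𝕜 → Matrix n n 𝕜} {A : Matrix n n 𝕜} {t₀ : 𝕜}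
    (hc : ∀ i j, HasDerivAt (fun t => c t i j) (A i j) t₀) (h₁ : c t₀ = 1) :
    HasDerivAt (fun t => (c t).det) A.trace t₀ := by
  -- The derivative given by `hasDerivAt_det` depends only on `c t₀` and `A`, so we may replace
  -- `c` by the affine curve `t ↦ 1 + (t - t₀) • A`, whose determinant is a polynomial in `t`.
  have h_affine (i j : n) : HasDerivAt (fun t => (1 + (t - t₀) • A) i j) (A i j) t₀ := by
    simpa using ((hasDerivAt_id t₀).sub_const t₀).mul_const (A i j)
  have h_affine_det := hasDerivAt_det_one_add_smul A
  rw [← sub_self t₀] at h_affine_det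
  have h_eq := (hasDerivAt_det h_affine).unique h_affine_det.comp_sub_const
  simp only [sub_self, zero_smul, add_zero, ← h₁] at h_eq
  exact h_eq ▸ hasDerivAt_det hc

end Matrix

theorem eq_exp_mul_of_map_add_eq_mul {g : ℝ → ℝ} {τ : ℝ}
    (hadd : ∀ s t, g (s + t) = g s * g t) (h₀ : g 0 = 1) (hg : HasDerivAt g τ 0) (t : ℝ) :
    g t = Real.exp (τ * t) := by
  have hderiv (u : ℝ) : HasDerivAt g (g u * τ) u := by
    rw [← sub_self u] at hg
    refine (hg.comp_sub_const u u |>.const_mul (g u)).congr_of_eventuallyEq ?_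
    filter_upwards with v
    simp [← hadd]
  have hconst (u : ℝ) : HasDerivAt (fun v => g v * Real.exp (-(τ * v))) 0 u :=
    ((hderiv u).mul ((hasDerivAt_id' u).const_mul τ).fun_neg.exp).congr_deriv (by ring)
  have h_one := is_const_of_deriv_eq_zero (fun u => (hconst u).differentiableAt)
    (fun u => (hconst u).deriv) t 0
  simp only [h₀, mul_zero, neg_zero, Real.exp_zero, mul_one] at h_one
  rwa [Real.exp_neg, mul_inv_eq_one₀ (Real.exp_pos _).ne'] at h_one

namespace ContinuousLinearMap

open NormedSpace

variable {V : Type*} [NormedAddCommGroup V] [NormedSpace ℝ V]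

theorem det_exp_smul [FiniteDimensional ℝ V] (E : V →L[ℝ] V) (t : ℝ) :
    (exp (t • E)).det = Real.exp (LinearMap.trace ℝ V E * t) := by
  refine eq_exp_mul_of_map_add_eq_mul (g := fun t => (exp (t • E)).det) (fun s t => ?_)
    (by simp [ContinuousLinearMap.det]) ?_ t
  · rw [add_smul, exp_add_of_commute_of_mem_ball (𝕂 := ℝ)
      ((Commute.refl E).smul_left s |>.smul_right t)
      (by simp [expSeries_radius_eq_top]) (by simp [expSeries_radius_eq_top])]
    exact LinearMap.det_comp _ _
  · let b := Module.finBasis ℝ V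
    have h_entry (i j) : HasDerivAt
        (fun t : ℝ => LinearMap.toMatrix b b (exp (t • E) : V →L[ℝ] V) i j)
        (LinearMap.toMatrix b b E i j) 0 := by
      have h := (hasDerivAt_exp_smul_const (𝕂 := ℝ) E 0).clm_apply (hasDerivAt_const 0 (b j))
      simp only [zero_smul, exp_zero, one_mul, map_zero, add_zero] at h
      simp only [LinearMap.toMatrix_apply]
      exact (LinearMap.toContinuousLinearMap (b.coord i)).hasFDerivAt.comp_hasDerivAt 0 h
    simpa [LinearMap.det_toMatrix, ← LinearMap.trace_eq_matrix_trace] using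
      Matrix.hasDerivAt_det_of_eq_one h_entry (by simp)

theorem exp_smul_apply_of_apply_eq_zero [CompleteSpace V] {E : V →L[ℝ] V} {x : V}
    (hx : E x = 0) (t : ℝ) : exp (t • E) x = x := by
  have hderiv (u : ℝ) : HasDerivAt (fun u : ℝ => exp (u • E) x) 0 u := by
    simpa [hx] using (hasDerivAt_exp_smul_const (𝕂 := ℝ) E u).clm_apply (hasDerivAt_const u x)
  simpa using is_const_of_deriv_eq_zero (fun u => (hderiv u).differentiableAt)
    (fun u => (hderiv u).deriv) t 0

theorem injective_of_tendsto_exp_smul_atBot [CompleteSpace V] {E : V →L[ℝ] V}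
    (h : Tendsto (fun t : ℝ => exp (t • E)) atBot (𝓝 0)) : Function.Injective E := by
  refine (injective_iff_map_eq_zero E).mpr fun x hx => ?_
  have hx_lim : Tendsto (fun t : ℝ => exp (t • E) x) atBot (𝓝 0) := by
    simpa [Function.comp_def] using ((apply ℝ V x).continuous.tendsto 0).comp h
  simp only [exp_smul_apply_of_apply_eq_zero hx] at hx_lim
  exact tendsto_nhds_unique tendsto_const_nhds hx_lim

theorem trace_pos_of_tendsto_exp_smul_atBot [FiniteDimensional ℝ V] [Nontrivial V]
    {E : V →L[ℝ] V} (h : Tendsto (fun t : ℝ => exp (t • E)) atBot (𝓝 0)) :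
    0 < LinearMap.trace ℝ V E := by
  rw [← tendsto_const_mul_atBot_iff_pos tendsto_id, ← Real.tendsto_exp_comp_nhds_zero]
  simpa [← det_exp_smul, Function.comp_def, ContinuousLinearMap.det, Module.finrank_pos] using
    (continuous_det.tendsto 0).comp h

end ContinuousLinearMap

theorem IsContracting.tendsto_exp_smul_atBot {d : ℕ}
    {E : EuclideanSpace ℝ (Fin d) →L[ℝ] EuclideanSpace ℝ (Fin d)} (h : IsContracting E) :
    Tendsto (fun t : ℝ => NormedSpace.exp (t • E)) atBot (𝓝 0) := by
  rw [tendsto_zero_iff_norm_tendsto_zero]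
  simpa [Function.comp_def, Tgrp] using h.comp Real.tendsto_exp_atBot_nhdsGT

/-- If `{T_r} = {r^E}` is a contracting continuous one-parameter group on `ℝ^d`,
then `E` is invertible and `tr E > 0`. -/
theorem contracting_generator_invertible_and_trace_pos {d : ℕ} (hd : 0 < d)
    (E : EuclideanSpace ℝ (Fin d) →L[ℝ] EuclideanSpace ℝ (Fin d))
    (h : IsContracting E) :
    Function.Bijective E ∧
      0 < LinearMap.trace ℝ (EuclideanSpace ℝ (Fin d)) (E : EuclideanSpace ℝ (Fin d) →ₗ[ℝ] EuclideanSpace ℝ (Fin d)) := by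
  have : Nontrivial (EuclideanSpace ℝ (Fin d)) :=
    Module.nontrivial_of_finrank_pos (R := ℝ) (by simpa using hd)
  have h_exp := h.tendsto_exp_smul_atBot
  have h_inj := ContinuousLinearMap.injective_of_tendsto_exp_smul_atBot h_exp
  exact ⟨⟨h_inj, LinearMap.injective_iff_surjective.mp h_inj⟩,
    ContinuousLinearMap.trace_pos_of_tendsto_exp_smul_atBot h_exp⟩
end

section
/- Let P : R^d → R be continuous, positive definite (P ≥ 0 and P(x)=0 iff x=0), and suppose there exists E ∈ End(R^d) with P(r^E x) = r P(x) for all r > 0 and x ∈ R^d. Then the following are equivalent: (a) the level set S = {η : P(η) = 1} is compact; (b) there is M > 0 such that P(x) > 1 for all |x| ≥ M; (c) for every such exponent E the group r^E is contracting; (d) there exists such an exponent E for which r^E is contracting; (e) P(x) → ∞ as |x| → ∞. -/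
open MeasureTheory Filter Set

/-- `E` is an exponent of `P`: `P(r^E x) = r · P(x)` for all `r > 0` and `x ∈ ℝ^d`. -/
def IsExpOf {d : ℕ} (P : EuclideanSpace ℝ (Fin d) → ℝ)
    (E : EuclideanSpace ℝ (Fin d) →L[ℝ] EuclideanSpace ℝ (Fin d)) : Prop :=
  ∀ r : ℝ, 0 < r → ∀ x : EuclideanSpace ℝ (Fin d), P (Tgrp E r x) = r * P x

/-! All five conditions in fact hold. Homogeneity makes `s^E` map the unit ball into
`{P ≤ s · max_{‖x‖ ≤ 1} P}`, which for small `s` misses the sphere of radius `ε` (where `P` is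
bounded below by a positive constant), so `‖s^E‖ → 0`. Conversely, if `P x ≤ 1 ≤ ‖x‖`, the
intermediate value theorem gives `s ∈ (0, 1]` with `‖s^E x‖ = 1`; then `s ≥ min_{‖u‖ = 1} P`, so
`x = (s⁻¹)^E (s^E x)` is bounded by `sup ‖σ^E‖` over a compact range of `σ`. Dilating by `t^E`,
every sublevel set of `P` is bounded, which gives (a), (b) and (e). -/

open Metric Bornology

lemma exists_pos_le_on_sphere {V : Type*} [NormedAddCommGroup V] [ProperSpace V] {P : V → ℝ}
    (hc : Continuous P) (hpos : ∀ x, x ≠ 0 → 0 < P x) {r : ℝ} (hr : r ≠ 0) :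
    ∃ μ, 0 < μ ∧ ∀ z ∈ sphere (0 : V) r, μ ≤ P z :=
  (isCompact_sphere 0 r).exists_forall_le' hc.continuousOn fun z hz =>
    hpos z (ne_of_mem_sphere hz hr)

lemma ContinuousLinearMap.opNorm_le_of_sphere_separates {V W : Type*} [NormedAddCommGroup V]
    [NormedSpace ℝ V] [NormedAddCommGroup W] [NormedSpace ℝ W] {P : W → ℝ} {T : V →L[ℝ] W}
    {ε μ : ℝ} (hε : 0 < ε) (hsphere : ∀ z ∈ sphere (0 : W) ε, μ ≤ P z)
    (hball : ∀ x ∈ closedBall (0 : V) 1, P (T x) < μ) : ‖T‖ ≤ ε := by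
  refine T.opNorm_le_of_unit_norm hε.le fun u hu => le_of_not_gt fun hlt => ?_
  have hTu : 0 < ‖T u‖ := hε.trans hlt
  have hc0 : 0 ≤ ε / ‖T u‖ := by positivity
  have hc1 : ε / ‖T u‖ ≤ 1 := (div_le_one hTu).2 hlt.le
  -- `(ε / ‖T u‖) • u` lies in the unit ball and is sent onto the `ε`-sphere
  refine (hball ((ε / ‖T u‖) • u) ?_).not_ge (hsphere _ ?_)
  · simpa [norm_smul, abs_of_pos hε, hu] using hc1
  · simp [norm_smul, abs_of_pos hε, hTu.ne']

section ExpLogSmul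

variable {𝔸 : Type*} [NormedRing 𝔸] [NormedAlgebra ℝ 𝔸] [CompleteSpace 𝔸]

lemma NormedSpace.exp_log_mul_smul (a : 𝔸) {r s : ℝ} (hr : r ≠ 0) (hs : s ≠ 0) :
    exp (Real.log (r * s) • a) = exp (Real.log r • a) * exp (Real.log s • a) := by
  let +nondep : NormedAlgebra ℚ 𝔸 := .restrictScalars ℚ ℝ 𝔸
  rw [Real.log_mul hr hs, add_smul,
    exp_add_of_commute (((Commute.refl a).smul_left _).smul_right _)]

lemma NormedSpace.continuousOn_exp_log_smul (a : 𝔸) :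
    ContinuousOn (fun r : ℝ => exp (Real.log r • a)) (Ioi 0) := by
  let +nondep : NormedAlgebra ℚ 𝔸 := .restrictScalars ℚ ℝ 𝔸
  exact exp_continuous.comp_continuousOn
    ((Real.continuousOn_log.mono fun _ hr => ne_of_gt hr).smul continuousOn_const)

end ExpLogSmul

section OneParameterGroup

variable {d : ℕ} {E : EuclideanSpace ℝ (Fin d) →L[ℝ] EuclideanSpace ℝ (Fin d)}

lemma Tgrp_one : Tgrp E 1 = 1 := by
  rw [Tgrp, Real.log_one, zero_smul ℝ E, NormedSpace.exp_zero]

lemma Tgrp_mul {r s : ℝ} (hr : 0 < r) (hs : 0 < s) :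
    Tgrp E (r * s) = Tgrp E r * Tgrp E s :=
  NormedSpace.exp_log_mul_smul E hr.ne' hs.ne'

lemma continuousOn_Tgrp : ContinuousOn (Tgrp E) (Ioi 0) :=
  NormedSpace.continuousOn_exp_log_smul E

lemma Tgrp_inv_apply_Tgrp_apply {r : ℝ} (hr : 0 < r) (x : EuclideanSpace ℝ (Fin d)) :
    Tgrp E r⁻¹ (Tgrp E r x) = x := by
  rw [← mul_apply_eq_comp, ← Tgrp_mul (inv_pos.2 hr) hr, inv_mul_cancel₀ hr.ne',
    Tgrp_one, one_apply_eq_self]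

lemma IsContracting.exists_norm_Tgrp_apply_eq_one (hE : IsContracting E)
    {x : EuclideanSpace ℝ (Fin d)} (hx : 1 ≤ ‖x‖) : ∃ s ∈ Ioc (0 : ℝ) 1, ‖Tgrp E s x‖ = 1 := by
  have hx0 : 0 < ‖x‖ := one_pos.trans_le hx
  obtain ⟨s₀, hsmall, hs₀⟩ : ∃ s₀, ‖Tgrp E s₀‖ < ‖x‖⁻¹ ∧ s₀ ∈ Ioo (0 : ℝ) 1 :=
    ((hE.eventually (gt_mem_nhds (inv_pos.2 hx0))).and (Ioo_mem_nhdsGT one_pos)).exists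
  have hs₀x : ‖Tgrp E s₀ x‖ ≤ 1 :=
    calc ‖Tgrp E s₀ x‖ ≤ ‖Tgrp E s₀‖ * ‖x‖ := (Tgrp E s₀).le_opNorm x
      _ ≤ ‖x‖⁻¹ * ‖x‖ := by gcongr
      _ = 1 := inv_mul_cancel₀ hx0.ne'
  have hcont : ContinuousOn (fun s => ‖Tgrp E s x‖) (Icc s₀ 1) :=
    ((continuousOn_Tgrp.mono fun _ hs => hs₀.1.trans_le hs.1).clm_apply continuousOn_const).norm
  obtain ⟨s, hs, hsx⟩ := intermediate_value_Icc hs₀.2.le hcont ⟨hs₀x, by simpa [Tgrp_one] using hx⟩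
  exact ⟨s, ⟨hs₀.1.trans_le hs.1, hs.2⟩, hsx⟩

variable {P : EuclideanSpace ℝ (Fin d) → ℝ}

theorem IsExpOf.isContracting (hc : Continuous P) (hpos : ∀ x, x ≠ 0 → 0 < P x)
    (hE : IsExpOf P E) : IsContracting E := by
  obtain ⟨M, hM⟩ := (isCompact_closedBall (0 : EuclideanSpace ℝ (Fin d)) 1).bddAbove_image
    hc.continuousOn
  have hM₁ : 0 < max M 1 := lt_max_of_lt_right one_pos
  refine tendsto_order.2 ⟨fun a ha => .of_forall fun s => ha.trans_le (norm_nonneg _),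
    fun ε hε => ?_⟩
  obtain ⟨μ, hμ, hμP⟩ := exists_pos_le_on_sphere hc hpos (half_pos hε).ne'
  filter_upwards [Ioo_mem_nhdsGT (div_pos hμ hM₁)] with s ⟨hs0, hs⟩
  refine ((Tgrp E s).opNorm_le_of_sphere_separates (half_pos hε) hμP fun x hx => ?_).trans_lt
    (half_lt_self hε)
  calc P (Tgrp E s x) = s * P x := hE s hs0 x
    _ ≤ s * max M 1 := by gcongr; exact (hM (mem_image_of_mem P hx)).trans (le_max_left _ _)
    _ < μ := (lt_div_iff₀ hM₁).1 hs

lemma IsExpOf.isBounded_setOf_le_one (hc : Continuous P) (hpos : ∀ x, x ≠ 0 → 0 < P x)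
    (hE : IsExpOf P E) : IsBounded {x | P x ≤ 1} := by
  obtain ⟨m, hm, hmP⟩ := exists_pos_le_on_sphere hc hpos one_ne_zero
  have hcont : ContinuousOn (Tgrp E) (Icc 1 m⁻¹) :=
    continuousOn_Tgrp.mono fun σ hσ => one_pos.trans_le hσ.1
  obtain ⟨C, hC⟩ := isCompact_Icc.exists_bound_of_continuousOn hcont
  refine isBounded_iff_forall_norm_le.2 ⟨max 1 C, fun x hx => ?_⟩
  rcases le_or_gt ‖x‖ 1 with hx1 | hx1
  · exact hx1.trans (le_max_left _ _)
  obtain ⟨s, ⟨hs0, hs1⟩, hsx⟩ := (hE.isContracting hc hpos).exists_norm_Tgrp_apply_eq_one hx1.le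
  have hms : m ≤ s :=
    calc m ≤ P (Tgrp E s x) := hmP _ (mem_sphere_zero_iff_norm.2 hsx)
      _ = s * P x := hE s hs0 x
      _ ≤ s := mul_le_of_le_one_right hs0.le hx
  calc ‖x‖ = ‖Tgrp E s⁻¹ (Tgrp E s x)‖ := by rw [Tgrp_inv_apply_Tgrp_apply hs0]
    _ ≤ ‖Tgrp E s⁻¹‖ * ‖Tgrp E s x‖ := (Tgrp E s⁻¹).le_opNorm _
    _ ≤ C := by
      rw [hsx, mul_one]
      exact hC _ ⟨one_le_inv_iff₀.2 ⟨hs0, hs1⟩, inv_anti₀ hm hms⟩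
    _ ≤ max 1 C := le_max_right _ _

lemma IsExpOf.setOf_le_subset_image (hE : IsExpOf P E) {t : ℝ} (ht : 0 < t) :
    {x | P x ≤ t} ⊆ Tgrp E t '' {x | P x ≤ 1} := by
  intro x hx
  refine ⟨Tgrp E t⁻¹ x, ?_, by simpa using Tgrp_inv_apply_Tgrp_apply (E := E) (inv_pos.2 ht) x⟩
  rw [mem_ofPred_eq, hE _ (inv_pos.2 ht), inv_mul_le_one₀ ht]
  exact hx

lemma IsExpOf.isBounded_setOf_le (hc : Continuous P) (hpos : ∀ x, x ≠ 0 → 0 < P x)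
    (hE : IsExpOf P E) (t : ℝ) : IsBounded {x | P x ≤ t} := by
  have ht : 0 < max t 1 := lt_max_of_lt_right one_pos
  refine ((Tgrp E _).lipschitz.isBounded_image (hE.isBounded_setOf_le_one hc hpos)).subset
    fun x (hx : P x ≤ t) => hE.setOf_le_subset_image ht (hx.trans (le_max_left t 1))

end OneParameterGroup

/-- For a continuous positive definite `P` with nonempty exponent set, the following are
equivalent: (a) `S = {P = 1}` is compact; (b) `P > 1` outside a ball; (c) every exponent
generates a contracting group; (d) some exponent generates a contracting group;
(e) `P(x) → ∞` as `|x| → ∞`. -/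
theorem positive_homogeneous_characterization {d : ℕ}
    (P : EuclideanSpace ℝ (Fin d) → ℝ)
    (hc : Continuous P) (hnn : ∀ x, 0 ≤ P x) (hpd : ∀ x, P x = 0 → x = 0)
    (hne : ∃ E, IsExpOf P E) :
    List.TFAE [
      IsCompact {η : EuclideanSpace ℝ (Fin d) | P η = 1},
      ∃ M : ℝ, 0 < M ∧ ∀ x : EuclideanSpace ℝ (Fin d), M ≤ ‖x‖ → 1 < P x,
      ∀ E, IsExpOf P E → IsContracting E,
      ∃ E, IsExpOf P E ∧ IsContracting E,
      Tendsto P (Filter.cocompact (EuclideanSpace ℝ (Fin d))) atTop] := by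
  have hpos : ∀ x, x ≠ 0 → 0 < P x := fun x hx => (hnn x).lt_of_ne' (mt (hpd x) hx)
  obtain ⟨E, hE⟩ := hne
  have hcon : ∀ E, IsExpOf P E → IsContracting E := fun E hE => hE.isContracting hc hpos
  have hbdd : ∀ t, IsBounded {x | P x ≤ t} := hE.isBounded_setOf_le hc hpos
  have hS : IsCompact {η | P η = 1} := isCompact_of_isClosed_isBounded
    (isClosed_eq hc continuous_const) ((hbdd 1).subset fun η hη => hη.le)
  have hM : ∃ M : ℝ, 0 < M ∧ ∀ x, M ≤ ‖x‖ → 1 < P x := by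
    obtain ⟨R, hR⟩ := isBounded_iff_forall_norm_le.1 (hbdd 1)
    exact ⟨max R 0 + 1, by positivity, fun x hx => lt_of_not_ge fun hPx =>
      by linarith [hR x hPx, le_max_left R 0]⟩
  have htop : Tendsto P (cocompact _) atTop := by
    rw [← cobounded_eq_cocompact]
    exact tendsto_atTop.2 fun t => mem_of_superset (isBounded_def.1 (hbdd t))
      fun x (hx : ¬P x ≤ t) => (not_le.1 hx).le
  refine List.tfae_of_forall True _ ?_
  simp only [List.mem_cons, List.not_mem_nil, or_false, forall_eq_or_imp, forall_eq]
  exact ⟨iff_true_intro hS, iff_true_intro hM, iff_true_intro hcon,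
    iff_true_intro ⟨E, hE, hcon E hE⟩, iff_true_intro htop⟩
end

section
/- Let E ∈ End(R^d) generate a contracting group, let Q be a C^l function on a neighborhood of 0 (l ≥ 1) that is strongly subhomogeneous with respect to E of order l, and suppose Q(0) = 0. Then Q is subhomogeneous with respect to E. -/
/-!
Along the curve `s ↦ Q (s^E ξ)`, the bound of order `j = 1` says that the derivative has norm
at most `ε` for small `s > 0`, while the curve tends to `Q 0 = 0` as `s → 0⁺`
because `s^E` contracts. The mean value inequality between `s` and `r`, followed by `s → 0⁺`,
gives `‖Q (r^E ξ)‖ ≤ ε r`.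
-/

open MeasureTheory Filter Set

/-- `Q` is subhomogeneous with respect to `E`. -/
def Subhom {d : ℕ} (Q : EuclideanSpace ℝ (Fin d) → ℂ)
    (E : EuclideanSpace ℝ (Fin d) →L[ℝ] EuclideanSpace ℝ (Fin d)) : Prop :=
  ∀ ε : ℝ, 0 < ε → ∀ K : Set (EuclideanSpace ℝ (Fin d)), IsCompact K →
    ∃ δ : ℝ, 0 < δ ∧ ∀ r : ℝ, 0 < r → r < δ → ∀ ξ ∈ K, ‖Q (Tgrp E r ξ)‖ ≤ ε * r

open Metric Topology

theorem norm_le_mul_of_tendsto_nhdsGT_zero_of_norm_deriv_le {F : Type*} [NormedAddCommGroup F]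
    [NormedSpace ℝ F] {f : ℝ → F} {δ ε r : ℝ}
    (hf : ∀ s ∈ Ioo 0 δ, DifferentiableAt ℝ f s) (hf' : ∀ s ∈ Ioo 0 δ, ‖deriv f s‖ ≤ ε)
    (hf0 : Tendsto f (𝓝[>] 0) (𝓝 0)) (hr : r ∈ Ioo 0 δ) :
    ‖f r‖ ≤ ε * r := by
  have hsub : ∀ᶠ s in 𝓝[>] 0, ‖f r - f s‖ ≤ ε * (r - s) := by
    filter_upwards [Ioo_mem_nhdsGT hr.1] with s hs
    have hsδ : s ∈ Ioo 0 δ := ⟨hs.1, hs.2.trans hr.2⟩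
    calc ‖f r - f s‖ ≤ ε * ‖r - s‖ :=
          (convex_Ioo 0 δ).norm_image_sub_le_of_norm_deriv_le hf hf' hsδ hr
      _ = ε * (r - s) := by rw [Real.norm_of_nonneg (sub_nonneg.2 hs.2.le)]
  have hlhs : Tendsto (fun s => ‖f r - f s‖) (𝓝[>] 0) (𝓝 ‖f r‖) := by
    simpa using (tendsto_const_nhds.sub hf0).norm
  have hrhs : Tendsto (fun s : ℝ => ε * (r - s)) (𝓝[>] 0) (𝓝 (ε * r)) :=
    ((by fun_prop : Continuous fun s : ℝ => ε * (r - s)).tendsto' 0 _ (by simp)).mono_left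
      nhdsWithin_le_nhds
  exact le_of_tendsto_of_tendsto hlhs hrhs hsub

section Tgrp

variable {d : ℕ} {E : EuclideanSpace ℝ (Fin d) →L[ℝ] EuclideanSpace ℝ (Fin d)}

theorem IsContracting.eventually_forall_Tgrp_apply_mem_ball (hE : IsContracting E)
    {K : Set (EuclideanSpace ℝ (Fin d))} (hK : Bornology.IsBounded K) {ρ : ℝ} (hρ : 0 < ρ) :
    ∀ᶠ r in 𝓝[>] 0, ∀ ξ ∈ K, Tgrp E r ξ ∈ ball 0 ρ := by
  obtain ⟨M, hM, hKM⟩ := hK.exists_pos_norm_le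
  have hsmall : ∀ᶠ r in 𝓝[>] 0, ‖Tgrp E r‖ * M < ρ := by
    have := hE.mul_const M
    rw [zero_mul] at this
    exact this (Iio_mem_nhds hρ)
  filter_upwards [hsmall] with r hr ξ hξ
  rw [mem_ball_zero_iff]
  calc ‖Tgrp E r ξ‖ ≤ ‖Tgrp E r‖ * ‖ξ‖ := (Tgrp E r).le_opNorm ξ
    _ ≤ ‖Tgrp E r‖ * M := by gcongr; exact hKM ξ hξ
    _ < ρ := hr

theorem IsContracting.tendsto_Tgrp_apply (hE : IsContracting E) (ξ : EuclideanSpace ℝ (Fin d)) :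
    Tendsto (fun r => Tgrp E r ξ) (𝓝[>] 0) (𝓝 0) :=
  tendsto_nhds.2 fun ρ hρ =>
    (hE.eventually_forall_Tgrp_apply_mem_ball Bornology.isBounded_singleton hρ).mono
      fun _ h => by simpa using h ξ rfl

variable (E) in
theorem differentiableAt_Tgrp_apply (ξ : EuclideanSpace ℝ (Fin d)) {r : ℝ} (hr : r ≠ 0) :
    DifferentiableAt ℝ (fun s => Tgrp E s ξ) r :=
  (((hasDerivAt_exp_smul_const E (Real.log r)).differentiableAt.comp r
    (Real.differentiableAt_log hr)).clm_apply (differentiableAt_const ξ) :)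

end Tgrp

/-- If `E` generates a contracting group, `Q` is `C^l` near `0` (`l ≥ 1`) and strongly
subhomogeneous with respect to `E` of order `l` (`|r^j ∂_r^j Q(r^E ξ)| ≤ ε r` for
`j = 1, …, l`), and `Q(0) = 0`, then `Q` is subhomogeneous with respect to `E`. -/
theorem strongly_subhomogeneous_implies_subhomogeneous {d : ℕ}
    (E : EuclideanSpace ℝ (Fin d) →L[ℝ] EuclideanSpace ℝ (Fin d)) (hE : IsContracting E)
    (l : ℕ) (hl : 1 ≤ l)
    (Q : EuclideanSpace ℝ (Fin d) → ℂ)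
    (U : Set (EuclideanSpace ℝ (Fin d))) (hU : U ∈ nhds (0 : EuclideanSpace ℝ (Fin d)))
    (hQl : ContDiffOn ℝ l Q U)
    (hstrong : ∀ ε : ℝ, 0 < ε → ∀ K : Set (EuclideanSpace ℝ (Fin d)), IsCompact K →
      ∃ δ : ℝ, 0 < δ ∧ ∀ j : ℕ, 1 ≤ j → j ≤ l → ∀ r : ℝ, 0 < r → r < δ → ∀ ξ ∈ K,
        r ^ j * ‖iteratedDeriv j (fun s : ℝ => Q (Tgrp E s ξ)) r‖ ≤ ε * r)
    (hQ0 : Q 0 = 0) :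
    Subhom Q E := by
  intro ε hε K hK
  obtain ⟨ρ, hρ, hballU⟩ := Metric.mem_nhds_iff.mp hU
  have hQ : DifferentiableOn ℝ Q (ball 0 ρ) :=
    (hQl.mono hballU).differentiableOn (by exact_mod_cast Nat.one_le_iff_ne_zero.mp hl)
  obtain ⟨δ₁, hδ₁, hT⟩ := (nhdsGT_basis (0 : ℝ)).eventually_iff.mp
    (hE.eventually_forall_Tgrp_apply_mem_ball hK.isBounded hρ)
  obtain ⟨δ₂, hδ₂, hderiv⟩ := hstrong ε hε K hK
  refine ⟨min δ₁ δ₂, lt_min hδ₁ hδ₂, fun r hr hrδ ξ hξ => ?_⟩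
  refine norm_le_mul_of_tendsto_nhdsGT_zero_of_norm_deriv_le
    (f := fun s => Q (Tgrp E s ξ)) (δ := min δ₁ δ₂)
    (fun s hs => ?_) (fun s hs => ?_) ?_ ⟨hr, hrδ⟩
  · have hmem := hT ⟨hs.1, hs.2.trans_le (min_le_left _ _)⟩ ξ hξ
    exact (hQ.differentiableAt (isOpen_ball.mem_nhds hmem)).comp s
      (differentiableAt_Tgrp_apply E ξ hs.1.ne')
  · have h := hderiv 1 le_rfl hl s hs.1 (hs.2.trans_le (min_le_right _ _)) ξ hξ
    rw [pow_one, iteratedDeriv_one] at h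
    exact le_of_mul_le_mul_left (by linarith) hs.1
  · have hQc : ContinuousAt Q 0 := hQ.continuousOn.continuousAt (ball_mem_nhds 0 hρ)
    exact hQ0 ▸ hQc.tendsto.comp (hE.tendsto_Tgrp_apply ξ)
end
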